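/- Let G be the standard Gaussian density. If θ, θ' ∈ ℝ satisfy |∫_θ^{θ'} G(η) dη| ≤ ε, then |G(θ) − G(θ')| ≤ ε·(3 + min{|θ|, |θ'|}). -/

import Mathlib

open MeasureTheory ProbabilityTheory

noncomputable def sgn (t : ℝ) : ℝ := if 0 ≤ t then 1 else -1

noncomputable def gpdf (t : ℝ) : ℝ := (Real.sqrt (2 * Real.pi))⁻¹ * Real.exp (-t ^ 2 / 2)

noncomputable def stdGaussian (n : ℕ) : Measure (Fin n → ℝ) :=
  Measure.pi fun _ => gaussianReal 0 1

set_option maxHeartbeats 800000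

section Aux
open Set Filter

lemma gpdf_nonneg (t : ℝ) : 0 ≤ gpdf t := by unfold gpdf; positivity
lemma gpdf_even (t : ℝ) : gpdf (-t) = gpdf t := by simp [gpdf]
lemma gpdf_anti {a b : ℝ} (ha : 0 ≤ a) (hab : a ≤ b) : gpdf b ≤ gpdf a := by
  unfold gpdf
  have : Real.exp (-b ^ 2 / 2) ≤ Real.exp (-a ^ 2 / 2) := Real.exp_le_exp.2 (by nlinarith)
  have h0 : (0:ℝ) ≤ (Real.sqrt (2 * Real.pi))⁻¹ := by positivity
  exact mul_le_mul_of_nonneg_left this h0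
lemma gpdf_cont : Continuous gpdf := by unfold gpdf; fun_prop
lemma gpdf_integrable : Integrable gpdf := by
  have h : Integrable fun x : ℝ => Real.exp (-(1/2 : ℝ) * x ^ 2) :=
    integrable_exp_neg_mul_sq (by norm_num)
  have hg : gpdf = fun x => (Real.sqrt (2 * Real.pi))⁻¹ * Real.exp (-(1/2 : ℝ) * x ^ 2) := by
    funext x; unfold gpdf; ring_nf
  rw [hg]; exact h.const_mul _
lemma gpdf_hasDeriv (t : ℝ) : HasDerivAt gpdf (-(t * gpdf t)) t := by
  have h1 : HasDerivAt (fun t : ℝ => -t ^ 2 / 2) (-t) t := by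
    have := ((hasDerivAt_pow 2 t).neg).div_const 2
    refine this.congr_deriv ?_
    simp; ring
  have h2 := (h1.exp).const_mul (Real.sqrt (2 * Real.pi))⁻¹
  refine h2.congr_deriv ?_
  unfold gpdf; ring
lemma gpdf_tendsto : Tendsto gpdf atTop (nhds 0) := by
  have h1 : Tendsto (fun t : ℝ => -t ^ 2 / 2) atTop atBot := by
    apply Tendsto.atBot_div_const (by norm_num : (0:ℝ) < 2)
    exact tendsto_neg_atTop_atBot.comp (tendsto_pow_atTop (two_ne_zero))
  have h2 : Tendsto gpdf atTop (nhds ((Real.sqrt (2 * Real.pi))⁻¹ * 0)) := by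
    unfold gpdf
    exact (Real.tendsto_exp_atBot.comp h1).const_mul _
  simpa using h2

lemma mills_deriv {c : ℝ} (hc : 0 < c) {x : ℝ} (hx : c ≤ x) :
    HasDerivAt (fun t => -gpdf t / t) (gpdf x * (x ^ 2 + 1) / x ^ 2) x := by
  have hx0 : x ≠ 0 := ne_of_gt (lt_of_lt_of_le hc hx)
  have h := ((gpdf_hasDeriv x).neg).div (hasDerivAt_id x) hx0
  refine h.congr_deriv ?_
  simp only [id, Pi.neg_apply]
  field_simp
  ring

lemma mills_upper {c : ℝ} (hc : 0 < c) : ∫ η in Ioi c, gpdf η ≤ gpdf c / c := by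
  have hderiv : ∀ x ∈ Ici c, HasDerivAt (fun t => -gpdf t / t) (gpdf x * (x ^ 2 + 1) / x ^ 2) x :=
    fun x hx => mills_deriv hc hx
  have hpos : ∀ x ∈ Ioi c, 0 ≤ gpdf x * (x ^ 2 + 1) / x ^ 2 := by
    intro x hx
    have h1 : 0 < x := lt_of_le_of_lt hc.le hx
    have h2 := gpdf_nonneg x
    positivity
  have htends : Tendsto (fun t => -gpdf t / t) atTop (nhds 0) := by
    have := (gpdf_tendsto.neg).div_atTop tendsto_id
    simpa using this
  have hint : IntegrableOn (fun x => gpdf x * (x ^ 2 + 1) / x ^ 2) (Ioi c) :=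
    integrableOn_Ioi_deriv_of_nonneg ((hderiv c self_mem_Ici).continuousAt.continuousWithinAt)
      (fun x hx => hderiv x (mem_Ici.2 (le_of_lt hx))) hpos htends
  have heq : ∫ x in Ioi c, gpdf x * (x ^ 2 + 1) / x ^ 2 = 0 - (-gpdf c / c) :=
    integral_Ioi_of_hasDerivAt_of_tendsto (f := fun t => -gpdf t / t) ((hderiv c self_mem_Ici).continuousAt.continuousWithinAt)
      (fun x hx => hderiv x (mem_Ici.2 (le_of_lt hx))) hint htends
  have hmono : ∫ x in Ioi c, gpdf x ≤ ∫ x in Ioi c, gpdf x * (x ^ 2 + 1) / x ^ 2 := by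
    apply setIntegral_mono_on gpdf_integrable.integrableOn hint measurableSet_Ioi
    intro x hx
    have hx0 : 0 < x := lt_of_le_of_lt hc.le hx
    rw [le_div_iff₀ (by positivity)]
    nlinarith [gpdf_nonneg x, sq_nonneg x]
  calc ∫ x in Ioi c, gpdf x ≤ _ := hmono
    _ = 0 - (-gpdf c / c) := heq
    _ = gpdf c / c := by ring

lemma mills_lower {a : ℝ} (ha : 0 ≤ a) : gpdf a / (a + 1) ≤ ∫ η in Ioi a, gpdf η := by
  have hderiv : ∀ x ∈ Ici a, HasDerivAt (fun t => -gpdf t / (t + 1))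
      (gpdf x * (x ^ 2 + x + 1) / (x + 1) ^ 2) x := by
    intro x hx
    have hx0 : x + 1 ≠ 0 := by have : (0:ℝ) ≤ x := le_trans ha hx; positivity
    have h := ((gpdf_hasDeriv x).neg).div ((hasDerivAt_id x).add_const 1) hx0
    refine h.congr_deriv ?_
    simp only [id, Pi.neg_apply]
    field_simp
    ring
  have hpos : ∀ x ∈ Ioi a, 0 ≤ gpdf x * (x ^ 2 + x + 1) / (x + 1) ^ 2 := by
    intro x hx
    have hx0 : (0:ℝ) ≤ x := le_trans ha (le_of_lt hx)
    have := gpdf_nonneg x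
    positivity
  have htends : Tendsto (fun t => -gpdf t / (t + 1)) atTop (nhds 0) := by
    have := (gpdf_tendsto.neg).div_atTop (tendsto_atTop_add_const_right _ 1 tendsto_id)
    simpa using this
  have hint : IntegrableOn (fun x => gpdf x * (x ^ 2 + x + 1) / (x + 1) ^ 2) (Ioi a) :=
    integrableOn_Ioi_deriv_of_nonneg ((hderiv a self_mem_Ici).continuousAt.continuousWithinAt)
      (fun x hx => hderiv x (mem_Ici.2 (le_of_lt hx))) hpos htends
  have heq : ∫ x in Ioi a, gpdf x * (x ^ 2 + x + 1) / (x + 1) ^ 2 = 0 - (-gpdf a / (a + 1)) :=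
    integral_Ioi_of_hasDerivAt_of_tendsto (f := fun t => -gpdf t / (t + 1)) ((hderiv a self_mem_Ici).continuousAt.continuousWithinAt)
      (fun x hx => hderiv x (mem_Ici.2 (le_of_lt hx))) hint htends
  have hmono : ∫ x in Ioi a, gpdf x * (x ^ 2 + x + 1) / (x + 1) ^ 2 ≤ ∫ x in Ioi a, gpdf x := by
    apply setIntegral_mono_on hint gpdf_integrable.integrableOn measurableSet_Ioi
    intro x hx
    have hx0 : 0 ≤ x := le_trans ha (le_of_lt hx)
    rw [div_le_iff₀ (by positivity)]
    nlinarith [gpdf_nonneg x]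
  calc gpdf a / (a + 1) = 0 - (-gpdf a / (a + 1)) := by ring
    _ = _ := heq.symm
    _ ≤ _ := hmono

lemma gpdf_intervalIntegrable (a b : ℝ) : IntervalIntegrable gpdf volume a b :=
  gpdf_integrable.intervalIntegrable

lemma split_Ioi {a b : ℝ} (hab : a ≤ b) :
    ∫ η in Ioi a, gpdf η = (∫ η in a..b, gpdf η) + ∫ η in Ioi b, gpdf η := by
  rw [intervalIntegral.integral_of_le hab]
  rw [← setIntegral_union (Ioc_disjoint_Ioi le_rfl) measurableSet_Ioi
    gpdf_integrable.integrableOn gpdf_integrable.integrableOn, Ioc_union_Ioi_eq_Ioi hab]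

lemma interval_nonneg (a b : ℝ) (hab : a ≤ b) : 0 ≤ ∫ η in a..b, gpdf η :=
  intervalIntegral.integral_nonneg hab (fun x _ => gpdf_nonneg x)

lemma key {a b : ℝ} (ha : 0 ≤ a) (hab : a ≤ b) :
    gpdf a - gpdf b ≤ (a + 1) * ∫ η in a..b, gpdf η := by
  rcases le_total b (a + 1) with hb | hb
  · have hftc : ∫ η in a..b, η * gpdf η = gpdf a - gpdf b := by
      have := intervalIntegral.integral_eq_sub_of_hasDerivAt (f := fun t => -gpdf t)
        (f' := fun t => t * gpdf t) (a := a) (b := b) ?_ ?_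
      · rw [this]; ring
      · intro x _
        have := (gpdf_hasDeriv x).neg
        exact this.congr_deriv (by ring)
      · exact ((continuous_id.mul gpdf_cont).intervalIntegrable a b)
    have hmono : ∫ η in a..b, η * gpdf η ≤ ∫ η in a..b, (a + 1) * gpdf η := by
      apply intervalIntegral.integral_mono_on hab
        ((continuous_id.mul gpdf_cont).intervalIntegrable a b)
        ((gpdf_intervalIntegrable a b).const_mul _)
      intro x hx
      exact mul_le_mul_of_nonneg_right (le_trans hx.2 hb) (gpdf_nonneg x)
    rw [intervalIntegral.integral_const_mul] at hmono
    linarith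
  · have hb0 : (0:ℝ) < b := lt_of_lt_of_le (by linarith) hb
    have h1 := mills_lower ha
    have h2 := mills_upper hb0
    have hsplit := split_Ioi hab
    set A := ∫ η in a..b, gpdf η
    set B := ∫ η in Ioi b, gpdf η
    have hB : 0 ≤ B := setIntegral_nonneg measurableSet_Ioi fun x _ => gpdf_nonneg x
    have ha1 : (0:ℝ) < a + 1 := by linarith
    have h1' : gpdf a ≤ (a + 1) * (A + B) := by
      rw [div_le_iff₀ ha1] at h1
      rw [hsplit] at h1
      linarith
    have h2' : B * b ≤ gpdf b := by
      rw [le_div_iff₀ hb0] at h2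
      linarith
    nlinarith

lemma gpdf_abs (t : ℝ) : gpdf |t| = gpdf t := by
  rcases le_total 0 t with h | h
  · rw [abs_of_nonneg h]
  · rw [abs_of_nonpos h]; exact gpdf_even t

lemma int_neg (u v : ℝ) : (∫ η in u..v, gpdf η) = ∫ η in (-v)..(-u), gpdf η := by
  rw [← intervalIntegral.integral_comp_neg gpdf]
  simp [gpdf_even]

lemma int_min_max {θ θ' : ℝ} (hle : θ ≤ θ') :
    (∫ η in (min |θ| |θ'|)..(max |θ| |θ'|), gpdf η) ≤ ∫ η in θ..θ', gpdf η := by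
  rcases le_total 0 θ with h0 | h0
  · have h0' : 0 ≤ θ' := h0.trans hle
    have hc : |θ| ≤ |θ'| := by rw [abs_of_nonneg h0, abs_of_nonneg h0']; exact hle
    rw [min_eq_left hc, max_eq_right hc, abs_of_nonneg h0, abs_of_nonneg h0']
  · rcases le_total θ' 0 with h0' | h0'
    · have hc : |θ'| ≤ |θ| := by rw [abs_of_nonpos h0, abs_of_nonpos h0']; linarith
      rw [min_eq_right hc, max_eq_left hc, abs_of_nonpos h0, abs_of_nonpos h0']
      rw [int_neg θ θ']
    · have hsum : (∫ η in θ..θ', gpdf η) =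
          (∫ η in (0:ℝ)..(-θ), gpdf η) + ∫ η in (0:ℝ)..θ', gpdf η := by
        rw [← intervalIntegral.integral_add_adjacent_intervals
          (gpdf_intervalIntegrable θ 0) (gpdf_intervalIntegrable 0 θ')]
        congr 1
        rw [int_neg θ 0]; norm_num
      rw [abs_of_nonpos h0, abs_of_nonneg h0', hsum]
      set p := -θ
      set q := θ'
      have hp : 0 ≤ p := by simp [p]; linarith
      have hq : 0 ≤ q := h0'
      have hadj : (∫ η in (0:ℝ)..(min p q), gpdf η) + (∫ η in (min p q)..(max p q), gpdf η)
          = ∫ η in (0:ℝ)..(max p q), gpdf η :=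
        intervalIntegral.integral_add_adjacent_intervals
          (gpdf_intervalIntegrable _ _) (gpdf_intervalIntegrable _ _)
      have h1 : 0 ≤ ∫ η in (0:ℝ)..(min p q), gpdf η :=
        interval_nonneg _ _ (le_min hp hq)
      have h2 : (∫ η in (0:ℝ)..p, gpdf η) + (∫ η in (0:ℝ)..q, gpdf η)
          = (∫ η in (0:ℝ)..(min p q), gpdf η) + ∫ η in (0:ℝ)..(max p q), gpdf η := by
        rcases le_total p q with hpq | hpq
        · rw [min_eq_left hpq, max_eq_right hpq]
        · rw [min_eq_right hpq, max_eq_left hpq]; ring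
      linarith

theorem main' (θ θ' ε : ℝ) (hε : 0 ≤ ε) (hle : θ ≤ θ')
    (h : |∫ η in θ..θ', gpdf η| ≤ ε) :
    |gpdf θ - gpdf θ'| ≤ ε * (3 + min |θ| |θ'|) := by
  set a := min |θ| |θ'| with hadef
  set b := max |θ| |θ'| with hbdef
  have ha : 0 ≤ a := le_min (abs_nonneg _) (abs_nonneg _)
  have hab : a ≤ b := min_le_max
  have habs : |gpdf θ - gpdf θ'| = gpdf a - gpdf b := by
    have anti := gpdf_anti ha hab
    rcases le_total |θ| |θ'| with hc | hc
    · have hae : a = |θ| := min_eq_left hc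
      have hbe : b = |θ'| := max_eq_right hc
      rw [hae, hbe] at anti ⊢
      rw [gpdf_abs, gpdf_abs] at anti ⊢
      exact abs_of_nonneg (by linarith)
    · have hae : a = |θ'| := min_eq_right hc
      have hbe : b = |θ| := max_eq_left hc
      rw [hae, hbe] at anti ⊢
      rw [gpdf_abs, gpdf_abs] at anti ⊢
      rw [abs_sub_comm]
      exact abs_of_nonneg (by linarith)
  have hint : (∫ η in a..b, gpdf η) ≤ ε :=
    le_trans (int_min_max hle) (le_trans (le_abs_self _) h)
  have hkey := key ha hab
  have hnn : 0 ≤ ∫ η in a..b, gpdf η := interval_nonneg _ _ hab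
  calc |gpdf θ - gpdf θ'| = gpdf a - gpdf b := habs
    _ ≤ (a + 1) * ∫ η in a..b, gpdf η := hkey
    _ ≤ (a + 1) * ε := mul_le_mul_of_nonneg_left hint (by linarith)
    _ ≤ ε * (3 + a) := by nlinarith

end Aux


/-- If the Gaussian measure of the interval between θ and θ' is at most ε, then
|G(θ) - G(θ')| ≤ ε (3 + min{|θ|, |θ'|}). -/
theorem gaussian_density_close (θ θ' ε : ℝ) (hε : 0 ≤ ε)
    (h : |∫ η in θ..θ', gpdf η| ≤ ε) :
    |gpdf θ - gpdf θ'| ≤ ε * (3 + min |θ| |θ'|) := by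
  rcases le_total θ θ' with hle | hle
  · exact main' θ θ' ε hε hle h
  · have h' : |∫ η in θ'..θ, gpdf η| ≤ ε := by
      rw [intervalIntegral.integral_symm, abs_neg]
      exact h
    have := main' θ' θ ε hε hle h'
    rwa [abs_sub_comm, min_comm] at this
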